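/- arXiv:2412.05963 — 6 statements merged into one kernel-verified Lean document; each statement's English description precedes it below -/
import Mathlib

section
/- Let k ≥ 2. If θ > θ_cr(k) = ((k−1)·k^k/2^k)^(1/(k+1)), then the equation θ^(k+1) = η(x) has no positive solution x, where η(x) = ((∑_{i=1}^{k−1} x^i)·(∑_{i=0}^{k−1} x^i)^k)/((x^k+1)^k). -/
/-!
Pairing the terms `x ^ i` and `x ^ (n - i)` of a sum whose index set is symmetric about `n / 2`
bounds each pair by `x ^ n + 1`, so `∑_{i=1}^{k-1} x^i ≤ (k-1)(x^k+1)/2` and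
`∑_{i=0}^{k-1} x^i ≤ k(x^(k-1)+1)/2`. Log-convexity of `j ↦ x ^ j + 1` gives
`(x^(k-1)+1)^k ≤ 2 (x^k+1)^(k-1)`. Together, `η(x) ≤ (k-1) k^k / 2^k = θ_cr(k)^(k+1)`,
with equality at `x = 1`.
-/

open Finset

noncomputable def eta (k : ℕ) (x : ℝ) : ℝ :=
  (∑ i ∈ Icc 1 (k - 1), x ^ i) * (∑ i ∈ range k, x ^ i) ^ k / (x ^ k + 1) ^ k

lemma pow_add_pow_sub_le_pow_add_one {x : ℝ} (hx : 0 ≤ x) {i n : ℕ} (h : i ≤ n) :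
    x ^ i + x ^ (n - i) ≤ x ^ n + 1 := by
  have hmul : x ^ i * x ^ (n - i) = x ^ n := by rw [← pow_add, Nat.add_sub_cancel' h]
  have hprod : 0 ≤ (x ^ i - 1) * (x ^ (n - i) - 1) := by
    rcases le_total x 1 with h1 | h1
    · exact mul_nonneg_of_nonpos_of_nonpos (sub_nonpos.2 (pow_le_one₀ hx h1))
        (sub_nonpos.2 (pow_le_one₀ hx h1))
    · exact mul_nonneg (sub_nonneg.2 (one_le_pow₀ h1)) (sub_nonneg.2 (one_le_pow₀ h1))
  nlinarith

lemma two_mul_sum_pow_le_card_mul {x : ℝ} (hx : 0 ≤ x) {n : ℕ} {s : Finset ℕ}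
    (hs : ∀ i ∈ s, i ≤ n ∧ n - i ∈ s) :
    2 * ∑ i ∈ s, x ^ i ≤ #s * (x ^ n + 1) := by
  have hreflect : ∑ i ∈ s, x ^ (n - i) = ∑ i ∈ s, x ^ i :=
    sum_nbij' (n - ·) (n - ·) (fun i hi ↦ (hs i hi).2) (fun i hi ↦ (hs i hi).2)
      (fun i hi ↦ Nat.sub_sub_self (hs i hi).1) (fun i hi ↦ Nat.sub_sub_self (hs i hi).1)
      (fun _ _ ↦ rfl)
  calc 2 * ∑ i ∈ s, x ^ i = ∑ i ∈ s, (x ^ i + x ^ (n - i)) := by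
        rw [sum_add_distrib, hreflect, two_mul]
    _ ≤ ∑ _i ∈ s, (x ^ n + 1) :=
        sum_le_sum fun i hi ↦ pow_add_pow_sub_le_pow_add_one hx (hs i hi).1
    _ = #s * (x ^ n + 1) := by rw [sum_const, nsmul_eq_mul]

lemma pow_succ_le_mul_pow_of_logConvex {a : ℕ → ℝ} (ha : ∀ j, 0 < a j)
    (hconv : ∀ j, a (j + 1) ^ 2 ≤ a j * a (j + 2)) :
    ∀ j, a j ^ (j + 1) ≤ a 0 * a (j + 1) ^ j
  | 0 => by simp
  | j + 1 => by
    have ih := pow_succ_le_mul_pow_of_logConvex ha hconv j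
    have key : a (j + 1) ^ j * a (j + 1) ^ (j + 2) ≤ a (j + 1) ^ j * (a 0 * a (j + 2) ^ (j + 1)) :=
      calc a (j + 1) ^ j * a (j + 1) ^ (j + 2) = (a (j + 1) ^ 2) ^ (j + 1) := by ring
        _ ≤ (a j * a (j + 2)) ^ (j + 1) := pow_le_pow_left₀ (sq_nonneg _) (hconv j) _
        _ = a j ^ (j + 1) * a (j + 2) ^ (j + 1) := mul_pow _ _ _
        _ ≤ (a 0 * a (j + 1) ^ j) * a (j + 2) ^ (j + 1) := by
            gcongr; exact (pow_pos (ha _) _).le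
        _ = a (j + 1) ^ j * (a 0 * a (j + 2) ^ (j + 1)) := by ring
    exact le_of_mul_le_mul_left key (pow_pos (ha _) _)

lemma pow_add_one_pow_succ_le {x : ℝ} (hx : 0 ≤ x) (j : ℕ) :
    (x ^ j + 1) ^ (j + 1) ≤ 2 * (x ^ (j + 1) + 1) ^ j := by
  have hconv (j : ℕ) : (x ^ (j + 1) + 1) ^ 2 ≤ (x ^ j + 1) * (x ^ (j + 2) + 1) := by
    rw [show x ^ (j + 1) = x ^ j * x by ring, show x ^ (j + 2) = x ^ j * x ^ 2 by ring]
    nlinarith [mul_nonneg (pow_nonneg hx j) (sq_nonneg (x - 1))]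
  have h := pow_succ_le_mul_pow_of_logConvex (a := fun j ↦ x ^ j + 1) (fun _ ↦ by positivity)
    hconv j
  norm_num at h
  linarith

lemma eta_le {k : ℕ} (hk : 1 ≤ k) {x : ℝ} (hx : 0 ≤ x) :
    eta k x ≤ ((k : ℝ) - 1) * (k : ℝ) ^ k / 2 ^ k := by
  obtain ⟨m, rfl⟩ : ∃ m, k = m + 1 := ⟨k - 1, by omega⟩
  simp only [eta, Nat.add_sub_cancel, Nat.cast_add, Nat.cast_one, add_sub_cancel_right]
  have hS1 : 2 * ∑ i ∈ Icc 1 m, x ^ i ≤ m * (x ^ (m + 1) + 1) := by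
    simpa using two_mul_sum_pow_le_card_mul hx (n := m + 1) (s := Icc 1 m)
      (fun i hi ↦ by simp only [mem_Icc] at hi ⊢; omega)
  have hS0 : 2 * ∑ i ∈ range (m + 1), x ^ i ≤ (m + 1) * (x ^ m + 1) := by
    simpa using two_mul_sum_pow_le_card_mul hx (n := m) (s := range (m + 1))
      (fun i hi ↦ by simp only [mem_range] at hi ⊢; omega)
  have hlogconv := pow_add_one_pow_succ_le hx m
  have hsum_nonneg : 0 ≤ ∑ i ∈ range (m + 1), x ^ i := sum_nonneg fun _ _ ↦ by positivity
  rw [div_le_div_iff₀ (by positivity) (by positivity)]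
  calc (∑ i ∈ Icc 1 m, x ^ i) * (∑ i ∈ range (m + 1), x ^ i) ^ (m + 1) * 2 ^ (m + 1)
      = 2 * (∑ i ∈ Icc 1 m, x ^ i) * (2 * ∑ i ∈ range (m + 1), x ^ i) ^ (m + 1) / 2 := by ring
    _ ≤ m * (x ^ (m + 1) + 1) * ((m + 1) * (x ^ m + 1)) ^ (m + 1) / 2 := by gcongr
    _ = m * (m + 1) ^ (m + 1) * (x ^ (m + 1) + 1) * (x ^ m + 1) ^ (m + 1) / 2 := by
        rw [mul_pow]; ring
    _ ≤ m * (m + 1) ^ (m + 1) * (x ^ (m + 1) + 1) * (2 * (x ^ (m + 1) + 1) ^ m) / 2 := by gcongr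
    _ = m * (m + 1) ^ (m + 1) * (x ^ (m + 1) + 1) ^ (m + 1) := by ring

theorem stmt_7_general (k : ℕ) (hk : 2 ≤ k) (θ : ℝ)
    (hgt : θ > (((k : ℝ) - 1) * (k : ℝ) ^ k / 2 ^ k) ^ ((1 : ℝ) / (k + 1))) :
    ¬∃ x : ℝ, 0 < x ∧
      θ ^ (k + 1) =
        (∑ i ∈ Finset.Icc 1 (k - 1), x ^ i) * (∑ i ∈ Finset.range k, x ^ i) ^ k /
          (x ^ k + 1) ^ k := by
  rintro ⟨x, hx, heq⟩
  have hc : 0 ≤ ((k : ℝ) - 1) * (k : ℝ) ^ k / 2 ^ k := by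
    have : 0 ≤ (k : ℝ) - 1 := sub_nonneg.2 (by exact_mod_cast (by omega : 1 ≤ k))
    positivity
  have hθ : 0 ≤ θ := (Real.rpow_nonneg hc _).trans hgt.le
  have hcrit : ((k : ℝ) - 1) * (k : ℝ) ^ k / 2 ^ k < θ ^ (k + 1) := by
    rwa [gt_iff_lt, one_div, ← Nat.cast_add_one, Real.rpow_inv_lt_iff_of_pos hc hθ (by positivity),
      Real.rpow_natCast] at hgt
  exact (eta_le (by omega) hx.le).not_gt (heq ▸ hcrit)

theorem stmt_7 (k : ℕ) (hk : 2 ≤ k) (θ : ℝ) (hθ : 0 < θ)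
    (hgt : θ > (((k : ℝ) - 1) * (k : ℝ) ^ k / 2 ^ k) ^ ((1 : ℝ) / (k + 1))) :
    ¬∃ x : ℝ, 0 < x ∧
      θ ^ (k + 1) =
        (∑ i ∈ Finset.Icc 1 (k - 1), x ^ i) * (∑ i ∈ Finset.range k, x ^ i) ^ k /
          (x ^ k + 1) ^ k :=
  stmt_7_general k hk θ hgt
end

section
/- Let k = 2, θ₁ = (1/2)·(4√2 − 4)^(1/3), and let y(θ) be the unique positive root of θ·y³ + y − 2θ = 0. Then for 0 < θ < θ₁ one has 2/(θ·y(θ)² + 1)² > 1, and for θ₁ < θ < 1 one has 2/(θ·y(θ)² + 1)² < 1. -/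
theorem stmt_11 (θ y : ℝ) (hy : 0 < y) (heq : θ * y ^ 3 + y - 2 * θ = 0) :
    (0 < θ ∧ θ < (1 / 2) * (4 * Real.sqrt 2 - 4) ^ ((1 : ℝ) / 3) →
      2 / (θ * y ^ 2 + 1) ^ 2 > 1) ∧
    ((1 / 2) * (4 * Real.sqrt 2 - 4) ^ ((1 : ℝ) / 3) < θ ∧ θ < 1 →
      2 / (θ * y ^ 2 + 1) ^ 2 < 1) := by
  set s := Real.sqrt 2 with hs
  have hs2 : s ^ 2 = 2 := Real.sq_sqrt (by norm_num)
  have hs0 : 0 ≤ s := Real.sqrt_nonneg 2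
  have hs1 : 1 < s := by nlinarith
  have hbase : (0:ℝ) < 4 * s - 4 := by nlinarith
  have hc3 : ((4 * s - 4) ^ ((1:ℝ)/3)) ^ (3:ℕ) = 4 * s - 4 := by
    rw [← Real.rpow_natCast ((4 * s - 4) ^ ((1:ℝ)/3)) 3,
      ← Real.rpow_mul hbase.le]
    norm_num
  set c := (4 * s - 4) ^ ((1:ℝ)/3) with hcdef
  have hcpos : 0 < c := Real.rpow_pos_of_pos hbase _
  have hc3' : c ^ 3 = 4 * s - 4 := hc3
  have hcs3 : (c * s / 2) ^ 3 = 2 - s := by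
    linear_combination (s^3/8) * hc3' + ((s^2 - s + 2)/2) * hs2
  have hcspos : 0 < c * s / 2 := by positivity
  constructor
  · rintro ⟨hθ, hθ1⟩
    have hθy : θ * (2 - y ^ 3) = y := by linear_combination -heq
    have h2y : 0 < 2 - y ^ 3 := by nlinarith
    -- y < c*s/2
    have hylt : y < c * s / 2 := by
      by_contra h
      push_neg at h
      have hy3 : (c * s / 2) ^ 3 ≤ y ^ 3 := pow_le_pow_left₀ hcspos.le h 3
      rw [hcs3] at hy3
      have h2ys : 2 - y ^ 3 ≤ s := by linarith
      have : c / 2 ≤ θ := by nlinarith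
      linarith
    have hy3lt : y ^ 3 < 2 - s := by
      have := pow_lt_pow_left₀ hylt hy.le (n := 3) (by norm_num)
      rwa [hcs3] at this
    have hkey : θ * y ^ 2 < s - 1 := by
      by_contra h
      push_neg at h
      nlinarith
    have hp1 : 0 < θ * y ^ 2 + 1 := by positivity
    have hsq : (θ * y ^ 2 + 1) ^ 2 < 2 := by nlinarith
    rw [gt_iff_lt, lt_div_iff₀ (by positivity)]
    linarith
  · rintro ⟨hθ1, _⟩
    have hθ : 0 < θ := lt_trans (by positivity) hθ1
    have hθy : θ * (2 - y ^ 3) = y := by linear_combination -heq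
    have h2y : 0 < 2 - y ^ 3 := by nlinarith
    have hygt : c * s / 2 < y := by
      by_contra h
      push_neg at h
      have hy3 : y ^ 3 ≤ (c * s / 2) ^ 3 := pow_le_pow_left₀ hy.le h 3
      rw [hcs3] at hy3
      have h2ys : s ≤ 2 - y ^ 3 := by linarith
      have : θ ≤ c / 2 := by nlinarith
      linarith
    have hy3gt : 2 - s < y ^ 3 := by
      have := pow_lt_pow_left₀ hygt hcspos.le (n := 3) (by norm_num)
      rwa [hcs3] at this
    have hkey : s - 1 < θ * y ^ 2 := by
      by_contra h
      push_neg at h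
      have hθy2 : 0 ≤ θ * y ^ 2 := by positivity
      nlinarith
    have hsq : 2 < (θ * y ^ 2 + 1) ^ 2 := by
      have hlt : s < θ * y ^ 2 + 1 := by linarith
      nlinarith [hlt, hs0, hs2]
    rw [div_lt_one (by positivity)]
    exact hsq
end

section
/- Let k = 2, θ₂ = (1/2)·(28 + 20√2)^(1/3), and let y(θ) be the unique positive root of θ·y³ + y − 2θ = 0. Then for θ > θ₂ one has 2·(θ·y(θ)²/(θ·y(θ)²+1))² > 1, and for 1 < θ < θ₂ one has 2·(θ·y(θ)²/(θ·y(θ)²+1))² < 1. -/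
lemma key12 (a b u v : ℝ) (ha : 0 < a) (hb : 0 < b) (hu : 0 < u) (hv : 0 < v)
    (e1 : a*u^3 + u - 2*a = 0) (e2 : b*v^3 + v - 2*b = 0) (hab : a < b) : u < v := by
  by_contra h
  push_neg at h
  have h2u : u^3 < 2 := by nlinarith
  have hvu : v^3 ≤ u^3 := pow_le_pow_left₀ hv.le h 3
  nlinarith [mul_pos (sub_pos.2 hab) (by nlinarith : (0:ℝ) < 2 - u^3),
    mul_nonneg hb.le (sub_nonneg.2 hvu)]

set_option maxHeartbeats 1000000 in
theorem stmt_12 (θ y : ℝ) (hy : 0 < y) (heq : θ * y ^ 3 + y - 2 * θ = 0) :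
    (θ > (1 / 2) * (28 + 20 * Real.sqrt 2) ^ ((1 : ℝ) / 3) →
      2 * (θ * y ^ 2 / (θ * y ^ 2 + 1)) ^ 2 > 1) ∧
    (1 < θ ∧ θ < (1 / 2) * (28 + 20 * Real.sqrt 2) ^ ((1 : ℝ) / 3) →
      2 * (θ * y ^ 2 / (θ * y ^ 2 + 1)) ^ 2 < 1) := by
  set s2 := Real.sqrt 2 with hs2def
  have hs2 : s2^2 = 2 := Real.sq_sqrt (by norm_num)
  have hs2pos : 0 < s2 := Real.sqrt_pos.2 (by norm_num)
  have hs2lt : s2 < 2 := by nlinarith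
  set c := (1/2) * (28 + 20*s2) ^ ((1:ℝ)/3) with hcdef
  have hbase : (0:ℝ) < 28 + 20*s2 := by positivity
  have hc3 : c^3 = (28 + 20*s2)/8 := by
    rw [hcdef, mul_pow, ← Real.rpow_natCast ((28+20*s2) ^ ((1:ℝ)/3)) 3,
      ← Real.rpow_mul hbase.le]
    norm_num
    ring
  have hcpos : 0 < c := by positivity
  have hc1 : 1 < c := by
    by_contra h
    push_neg at h
    nlinarith [mul_nonneg (sub_nonneg.2 h) (sq_nonneg c), mul_nonneg (sub_nonneg.2 h) (mul_pos hcpos hcpos).le]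
  have cube_lt : ∀ p q : ℝ, 0 ≤ p → p < q → p^3 < q^3 := by
    intro p q hp hpq
    have hq : 0 < q := lt_of_le_of_lt hp hpq
    nlinarith [mul_pos (sub_pos.2 hpq) (by nlinarith [mul_pos hq hq, mul_nonneg hp hq.le, mul_nonneg hp hp] : (0:ℝ) < q^2 + p*q + p^2)]
  have hz3 : (c*(2-s2))^3 = s2 := by
    linear_combination (2-s2)^3 * hc3 + (-(5/2)*s2^2 + (23/2)*s2 - 14) * hs2
  have hzpos : 0 < c*(2-s2) := by nlinarith
  have hzeq : c * (c*(2-s2))^3 + (c*(2-s2)) - 2*c = 0 := by rw [hz3]; ring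
  constructor
  · intro hθ
    have hθpos : 0 < θ := lt_trans hcpos hθ
    have hyz : c*(2-s2) < y := key12 c θ (c*(2-s2)) y hcpos hθpos hzpos hy hzeq heq hθ
    have hy3 : s2 < y^3 := by
      calc s2 = (c*(2-s2))^3 := hz3.symm
        _ < y^3 := cube_lt _ _ hzpos.le hyz
    have h2y : y^3 < 2 := by nlinarith
    have ha : s2 + 1 < θ * y^2 := by nlinarith [mul_pos hθpos hy, mul_pos hs2pos hy]
    have hd : 0 < θ * y^2 + 1 := by nlinarith
    have hkey : (θ*y^2 + 1)^2 < 2*(θ*y^2)^2 := by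
      nlinarith [mul_pos hs2pos (sub_pos.2 ha)]
    have : 2 * (θ * y ^ 2 / (θ * y ^ 2 + 1)) ^ 2 = 2*(θ*y^2)^2 / (θ*y^2+1)^2 := by
      rw [div_pow]; ring
    rw [this, gt_iff_lt, lt_div_iff₀ (by positivity)]
    linarith [hkey]
  · rintro ⟨hθ1, hθ⟩
    have hθpos : 0 < θ := by linarith
    have hyz : y < c*(2-s2) := key12 θ c y (c*(2-s2)) hθpos hcpos hy hzpos heq hzeq hθ
    have hy3 : y^3 < s2 := by
      calc y^3 < (c*(2-s2))^3 := cube_lt _ _ hy.le hyz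
        _ = s2 := hz3
    have h2y : y^3 < 2 := by nlinarith
    have hapos : 0 < θ * y^2 := by positivity
    have ha : θ * y^2 < s2 + 1 := by nlinarith [mul_pos hθpos hy, mul_pos hs2pos hy]
    have hd : 0 < θ * y^2 + 1 := by nlinarith
    have hkey : 2*(θ*y^2)^2 < (θ*y^2 + 1)^2 := by
      nlinarith [mul_pos hs2pos (sub_pos.2 ha), mul_pos hs2pos hapos]
    have : 2 * (θ * y ^ 2 / (θ * y ^ 2 + 1)) ^ 2 = 2*(θ*y^2)^2 / (θ*y^2+1)^2 := by
      rw [div_pow]; ring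
    rw [this, div_lt_iff₀ (by positivity)]
    linarith [hkey]
end

section
/- Let k ≥ 4 and θ > 1, and let y > 0 satisfy θ·y^(k+1) + y = 2θ. Then k·(θy^k/(θy^k+1))² > 1 (the Kesten–Stigum non-extremality condition holds). -/
theorem stmt_14 (k : ℕ) (hk : 4 ≤ k) (θ : ℝ) (hθ : 1 < θ)
    (y : ℝ) (hy : 0 < y) (heq : θ * y ^ (k + 1) + y = 2 * θ) :
    (k : ℝ) * (θ * y ^ k / (θ * y ^ k + 1)) ^ 2 > 1 := by
  have hy1 : 1 < y := by
    by_contra h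
    push_neg at h
    have hp : y ^ (k + 1) ≤ 1 := pow_le_one₀ hy.le h
    nlinarith
  have hyk : 0 < y ^ k := pow_pos hy k
  have hpos : 0 < θ * y ^ k + 1 := by positivity
  have hratio : θ * y ^ k / (θ * y ^ k + 1) = y ^ (k + 1) / 2 := by
    rw [div_eq_div_iff hpos.ne' two_ne_zero]
    have h2 : (θ * y ^ (k + 1) + y) * y ^ k = 2 * θ * y ^ k := by rw [heq]
    have hpa : y ^ (k + 1) = y ^ k * y := pow_succ y k
    nlinarith [h2, hpa]
  rw [hratio]
  have hpow : 1 < y ^ (k + 1) := one_lt_pow₀ hy1 (by omega)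
  have hk' : (4 : ℝ) ≤ (k : ℝ) := by exact_mod_cast hk
  nlinarith [hpow, hk', sq_nonneg (y ^ (k + 1))]
end

section
/- The 3×3 stochastic matrix P₂(x) with rows (x/(x+1), 1/(x+1), 0), (x²/(1+x²), 0, 1/(1+x²)), (0, x/(1+x), 1/(1+x)) has eigenvalues 1, √2·x/((x+1)·√(x²+1)), and −√2·x/((x+1)·√(x²+1)), for every x > 0. -/
theorem stmt_18 (x : ℝ) (hx : 0 < x) :
    spectrum ℝ
      (Matrix.of ![![x / (x + 1), 1 / (x + 1), 0],
        ![x ^ 2 / (1 + x ^ 2), 0, 1 / (1 + x ^ 2)],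
        ![0, x / (1 + x), 1 / (1 + x)]] : Matrix (Fin 3) (Fin 3) ℝ) =
      {1, Real.sqrt 2 * x / ((x + 1) * Real.sqrt (x ^ 2 + 1)),
        -(Real.sqrt 2 * x / ((x + 1) * Real.sqrt (x ^ 2 + 1)))} := by
  have hx1 : x + 1 ≠ 0 := by positivity
  have hx2 : (1:ℝ) + x ^ 2 ≠ 0 := by positivity
  have hx3 : (1:ℝ) + x ≠ 0 := by positivity
  have hs2 : (Real.sqrt (x ^ 2 + 1)) ^ 2 = x ^ 2 + 1 := Real.sq_sqrt (by positivity)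
  have h2 : (Real.sqrt 2) ^ 2 = 2 := Real.sq_sqrt (by norm_num)
  set lam : ℝ := Real.sqrt 2 * x / ((x + 1) * Real.sqrt (x ^ 2 + 1)) with hlam
  have hlamsq : lam ^ 2 = 2 * x ^ 2 / ((x + 1) ^ 2 * (x ^ 2 + 1)) := by
    rw [hlam, div_pow, mul_pow, mul_pow, h2, hs2]
  ext μ
  rw [spectrum.mem_iff, Matrix.isUnit_iff_isUnit_det, isUnit_iff_ne_zero, not_ne_iff,
    Matrix.det_fin_three]
  simp only [Matrix.sub_apply, Matrix.algebraMap_matrix_apply, Matrix.of_apply,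
    Matrix.cons_val', Matrix.cons_val_zero, Matrix.cons_val_one, Matrix.head_cons,
    Matrix.empty_val', Matrix.cons_val_fin_one, Matrix.head_fin_const, Matrix.cons_val_two,
    Matrix.tail_cons, if_true, if_false]
  norm_num [Fin.ext_iff]
  have key : (μ - x / (x + 1)) * μ * (μ - (1 + x)⁻¹) -
      (μ - x / (x + 1)) * (1 + x ^ 2)⁻¹ * (x / (1 + x)) -
      (x + 1)⁻¹ * (x ^ 2 / (1 + x ^ 2)) * (μ - (1 + x)⁻¹) =
      (μ - 1) * ((μ - lam) * (μ + lam)) := by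
    have : (μ - lam) * (μ + lam) = μ ^ 2 - lam ^ 2 := by ring
    rw [this, hlamsq]
    field_simp
    ring
  rw [key, mul_eq_zero, mul_eq_zero, sub_eq_zero, sub_eq_zero, add_eq_zero_iff_eq_neg]
end

section
/- Let θ₅ = ((2 + √(2 + 2√2))/(2 + 2√2))^(1/3) and let θ ∈ (θ₅, 1). Set ρ = (1 + √(1 + 8θ³))/(2θ³) and x₁ = (ρ + √(ρ²−4))/2. Then x₁ < √(1 + √2), and consequently 2·(x₁²/(x₁²+1))² < 1. -/
private lemma aux_rho_gt2 (a ρ : ℝ) (hapos : 0 < a) (ha1 : a < 1)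
    (hρpos : 0 < ρ) (hρeq : a * ρ ^ 2 = ρ + 2) : 2 < ρ := by
  have h1 : ρ + 2 < ρ ^ 2 := by
    nlinarith [mul_pos (sub_pos.mpr ha1) (mul_pos hρpos hρpos)]
  by_contra h
  push_neg at h
  nlinarith [mul_le_mul_of_nonneg_left h hρpos.le]

private lemma aux_rho_lt_t (a ρ t : ℝ) (ha : 1 / 2 < a)
    (hρeq : a * ρ ^ 2 = ρ + 2) (hct : t + 2 < a * t ^ 2)
    (hρ2 : 2 < ρ) (ht : 2 < t) : ρ < t := by
  by_contra h
  push_neg at h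
  nlinarith [mul_nonneg (sub_nonneg.mpr h)
    (show (0:ℝ) ≤ a * (ρ + t) - 1 by nlinarith)]

private lemma aux_sq (r s t : ℝ) (h2 : r ^ 2 = 2) (hs2 : s ^ 2 = 1 + r)
    (hts : t = r * s) : t ^ 2 - 4 = (2 * s - t) ^ 2 := by
  linear_combination (4 * s) * hts + (4 * r - 4) * hs2 + 4 * h2

private lemma aux_wnn (r s t : ℝ) (hr : 1 < r) (h2 : r ^ 2 = 2) (hs : 0 < s)
    (hts : t = r * s) : 0 ≤ 2 * s - t := by nlinarith

private lemma aux_final (x s r : ℝ) (hx : 0 < x) (hr : 1 < r) (h2 : r ^ 2 = 2)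
    (hs2 : s ^ 2 = 1 + r) (hxs : x < s) :
    2 * (x ^ 2 / (x ^ 2 + 1)) ^ 2 < 1 := by
  have hxs2 : x ^ 2 < 1 + r := by
    rw [← hs2]; exact pow_lt_pow_left₀ hxs hx.le (by norm_num)
  have hden : (0:ℝ) < x ^ 2 + 1 := by positivity
  have hq : x ^ 2 / (x ^ 2 + 1) < r / 2 := by
    rw [div_lt_div_iff₀ hden (by norm_num)]
    nlinarith [mul_lt_mul_of_pos_left hxs2 (show (0:ℝ) < 2 - r by nlinarith)]
  have hqnn : 0 ≤ x ^ 2 / (x ^ 2 + 1) := by positivity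
  nlinarith [mul_self_lt_mul_self hqnn hq, h2]

theorem stmt_19 (θ : ℝ)
    (hθ5 : ((2 + Real.sqrt (2 + 2 * Real.sqrt 2)) / (2 + 2 * Real.sqrt 2)) ^ ((1 : ℝ) / 3) < θ)
    (hθ1 : θ < 1)
    (ρ x₁ : ℝ)
    (hρ : ρ = (1 + Real.sqrt (1 + 8 * θ ^ 3)) / (2 * θ ^ 3))
    (hx₁ : x₁ = (ρ + Real.sqrt (ρ ^ 2 - 4)) / 2) :
    x₁ < Real.sqrt (1 + Real.sqrt 2) ∧
      2 * (x₁ ^ 2 / (x₁ ^ 2 + 1)) ^ 2 < 1 := by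
  set r2 := Real.sqrt 2 with hr2def
  have h2 : r2 ^ 2 = 2 := Real.sq_sqrt (by norm_num)
  have hr2pos : (1:ℝ) < r2 := by
    nlinarith [Real.sqrt_nonneg 2]
  set s := Real.sqrt (1 + r2) with hsdef
  have hs2 : s ^ 2 = 1 + r2 := Real.sq_sqrt (by linarith)
  have hspos : 0 < s := Real.sqrt_pos.mpr (by linarith)
  set t := Real.sqrt (2 + 2 * r2) with htdef
  have ht2 : t ^ 2 = 2 + 2 * r2 := Real.sq_sqrt (by linarith)
  have htpos : 0 < t := Real.sqrt_pos.mpr (by linarith)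
  have ht_gt2 : 2 < t := by nlinarith
  -- t = √2 * s
  have hts : t = r2 * s := by
    rw [htdef, hsdef, show (2:ℝ) + 2 * r2 = 2 * (1 + r2) by ring,
      Real.sqrt_mul (by norm_num)]
  set c := (2 + t) / (2 + 2 * r2) with hcdef
  have hcpos : 0 < c := by positivity
  have hc_half : 1 / 2 < c := by
    rw [hcdef, lt_div_iff₀ (by linarith)]
    nlinarith
  have hc_lt1 : c < 1 := by
    rw [hcdef, div_lt_one (by linarith)]
    nlinarith
  -- θ³ > c
  set a := θ ^ 3 with hadef
  have hθpos : 0 < θ := lt_trans (by positivity) hθ5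
  have hca : c < a := by
    have h3 : (c ^ ((1:ℝ)/3)) ^ 3 < θ ^ 3 :=
      pow_lt_pow_left₀ hθ5 (Real.rpow_nonneg hcpos.le _) (by norm_num)
    have hcc : (c ^ ((1:ℝ)/3)) ^ 3 = c := by
      rw [← Real.rpow_natCast (c ^ ((1:ℝ)/3)) 3, ← Real.rpow_mul hcpos.le]
      norm_num
    rw [hadef]; rw [hcc] at h3; exact h3
  have ha1 : a < 1 := by
    rw [hadef]
    calc θ ^ 3 < 1 ^ 3 := pow_lt_pow_left₀ hθ1 hθpos.le (by norm_num)
    _ = 1 := one_pow 3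
  have hapos : 0 < a := lt_trans hcpos hca
  -- quadratic equation for ρ
  set u := Real.sqrt (1 + 8 * a) with hudef
  have hu2 : u ^ 2 = 1 + 8 * a := Real.sq_sqrt (by positivity)
  have hunn : 0 ≤ u := Real.sqrt_nonneg _
  have h2aρ : 2 * a * ρ = 1 + u := by
    rw [hρ]; field_simp
  have hρeq : a * ρ ^ 2 = ρ + 2 := by
    have hsq : (2 * a * ρ) ^ 2 = (1 + u) ^ 2 := by rw [h2aρ]
    have h4a : (4 * a) * (a * ρ ^ 2) = (4 * a) * (ρ + 2) := by
      linear_combination hsq + hu2 - 2 * h2aρ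
    exact mul_left_cancel₀ (by positivity : (0:ℝ) < 4 * a).ne' h4a
  have hρpos : 0 < ρ := by
    rw [hρ]; positivity
  have hρ2 : 2 < ρ := aux_rho_gt2 a ρ hapos ha1 hρpos hρeq
  -- c satisfies the quadratic at t: c t² = t + 2
  have hct : c * t ^ 2 = t + 2 := by
    rw [hcdef, ht2]; field_simp; ring
  have hct' : t + 2 < a * t ^ 2 := by
    rw [← hct]
    exact mul_lt_mul_of_pos_right hca (by positivity)
  -- ρ < t
  have hρt : ρ < t := aux_rho_lt_t a ρ t (lt_trans hc_half hca) hρeq hct' hρ2 ht_gt2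
  -- √(t²−4) = 2s − t
  have hr2lt2 : r2 < 2 := by nlinarith
  have hw : Real.sqrt (t ^ 2 - 4) = 2 * s - t := by
    rw [aux_sq r2 s t h2 hs2 hts,
      Real.sqrt_sq (aux_wnn r2 s t hr2pos h2 hspos hts)]
  have hx1s : x₁ < s := by
    have hnn : (0:ℝ) ≤ ρ ^ 2 - 4 := by
      have h := pow_le_pow_left₀ (by norm_num : (0:ℝ) ≤ 2) hρ2.le 2
      norm_num at h; linarith
    have hlt : ρ ^ 2 - 4 < t ^ 2 - 4 :=
      sub_lt_sub_right (pow_lt_pow_left₀ hρt (by linarith) (by norm_num)) 4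
    have hsq := Real.sqrt_lt_sqrt hnn hlt
    rw [hw] at hsq
    rw [hx₁]; linarith
  refine ⟨hx1s, ?_⟩
  have hx1pos : 0 < x₁ := by
    rw [hx₁]
    have := Real.sqrt_nonneg (ρ ^ 2 - 4)
    linarith
  exact aux_final x₁ s r2 hx1pos hr2pos h2 hs2 hx1s
end
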